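/- Let M₁, M₂ be closed subspaces of a Hilbert space, M = M₁ ∩ M₂, A = M₁ ∩ M^⊥, B = M₂ ∩ M^⊥. Then for every k ∈ ℕ, (P_{M₂}P_{M₁})^k − P_M = (P_B P_A)^k as operators. -/

import Mathlib

/-! Write `M = M₁ ⊓ M₂` and `P = P_M`. Since `M ≤ Mᵢ`, each `P_{Mᵢ}` splits as the
orthogonal sum `P + P_{Mᵢ ⊓ Mᗮ}`, and the cross terms in `P_{M₂} P_{M₁}` vanish, so
`P_{M₂} P_{M₁} = P + Q` with `Q = P_B P_A`. As `P` is idempotent and `PQ = QP = 0`,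
`(P + Q)^k = P + Q^k` for `k ≥ 1`. -/

open scoped InnerProductSpace

noncomputable def proj {𝕜 H : Type*} [RCLike 𝕜] [NormedAddCommGroup H]
    [InnerProductSpace 𝕜 H] (S : Submodule 𝕜 H) [CompleteSpace S] : H →L[𝕜] H :=
  S.subtypeL.comp S.orthogonalProjectionOnto

theorem IsIdempotentElem.add_pow_succ_of_mul_eq_zero {R : Type*} [Semiring R] {p q : R}
    (hp : IsIdempotentElem p) (hpq : p * q = 0) (hqp : q * p = 0) (n : ℕ) :
    (p + q) ^ (n + 1) = p + q ^ (n + 1) := by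
  induction n with
  | zero => simp
  | succ n ih =>
    have hqnp : q ^ (n + 1) * p = 0 := by rw [pow_succ, mul_assoc, hqp, mul_zero]
    rw [pow_succ, ih, add_mul, mul_add, mul_add, hp.eq, hpq, hqnp, ← pow_succ, add_zero, zero_add]

namespace Submodule

variable {𝕜 E : Type*} [RCLike 𝕜] [NormedAddCommGroup E] [InnerProductSpace 𝕜 E]

theorem starProjection_inf_orthogonal_of_le {S T : Submodule 𝕜 E}
    [S.HasOrthogonalProjection] [T.HasOrthogonalProjection]
    [(S ⊓ Tᗮ).HasOrthogonalProjection] (h : T ≤ S) :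
    (S ⊓ Tᗮ).starProjection = S.starProjection - T.starProjection := by
  ext x
  refine eq_starProjection_of_mem_orthogonal ⟨sub_mem (S.starProjection_apply_mem x)
    (h (T.starProjection_apply_mem x)), ?_⟩ ?_
  · have hTS := congr($(starProjection_comp_starProjection_of_le h) x)
    simp only [ContinuousLinearMap.comp_apply] at hTS
    simpa [hTS] using T.sub_starProjection_mem_orthogonal (S.starProjection x)
  · have hx : x - (S.starProjection x - T.starProjection x)
        = (x - S.starProjection x) + T.starProjection x := by abel
    rw [sub_apply, hx]
    exact add_mem (orthogonal_le inf_le_left (S.sub_starProjection_mem_orthogonal x))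
      (orthogonal_le inf_le_right (T.le_orthogonal_orthogonal (T.starProjection_apply_mem x)))

theorem starProjection_comp_starProjection_eq_add {U V M : Submodule 𝕜 E}
    [U.HasOrthogonalProjection] [V.HasOrthogonalProjection] [M.HasOrthogonalProjection]
    [(U ⊓ Mᗮ).HasOrthogonalProjection] [(V ⊓ Mᗮ).HasOrthogonalProjection]
    (hU : M ≤ U) (hV : M ≤ V) :
    V.starProjection ∘L U.starProjection
      = M.starProjection + (V ⊓ Mᗮ).starProjection ∘L (U ⊓ Mᗮ).starProjection := by
  have hMU : M.starProjection * U.starProjection = M.starProjection :=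
    starProjection_comp_starProjection_of_le hU
  have hVM : V.starProjection * M.starProjection = M.starProjection := by
    ext x
    exact starProjection_eq_self_iff.2 (hV (M.starProjection_apply_mem x))
  simp only [← ContinuousLinearMap.mul_def, starProjection_inf_orthogonal_of_le hU,
    starProjection_inf_orthogonal_of_le hV, sub_mul, mul_sub, hMU, hVM,
    M.isIdempotentElem_starProjection.eq]
  abel

theorem starProjection_comp_starProjection_pow_succ {U V M : Submodule 𝕜 E}
    [U.HasOrthogonalProjection] [V.HasOrthogonalProjection] [M.HasOrthogonalProjection]
    [(U ⊓ Mᗮ).HasOrthogonalProjection] [(V ⊓ Mᗮ).HasOrthogonalProjection]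
    (hU : M ≤ U) (hV : M ≤ V) (n : ℕ) :
    (V.starProjection ∘L U.starProjection) ^ (n + 1)
      = M.starProjection
        + ((V ⊓ Mᗮ).starProjection ∘L (U ⊓ Mᗮ).starProjection) ^ (n + 1) := by
  have hMV : M ⟂ V ⊓ Mᗮ := (isOrtho_iff_le.2 inf_le_right).symm
  have hUM : U ⊓ Mᗮ ⟂ M := isOrtho_iff_le.2 inf_le_right
  rw [starProjection_comp_starProjection_eq_add hU hV]
  refine M.isIdempotentElem_starProjection.add_pow_succ_of_mul_eq_zero ?_ ?_ n
  · rw [ContinuousLinearMap.mul_def, ← ContinuousLinearMap.comp_assoc,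
      hMV.starProjection_comp_starProjection, ContinuousLinearMap.zero_comp]
  · rw [ContinuousLinearMap.mul_def, ContinuousLinearMap.comp_assoc,
      hUM.starProjection_comp_starProjection, ContinuousLinearMap.comp_zero]

end Submodule

theorem proj_eq_starProjection {𝕜 H : Type*} [RCLike 𝕜] [NormedAddCommGroup H]
    [InnerProductSpace 𝕜 H] (S : Submodule 𝕜 H) [CompleteSpace S] :
    proj S = S.starProjection :=
  rfl

theorem alternating_pow_sub_proj_general {𝕜 H : Type*} [RCLike 𝕜] [NormedAddCommGroup H]
    [InnerProductSpace 𝕜 H] (M₁ M₂ : Submodule 𝕜 H)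
    [CompleteSpace M₁] [CompleteSpace M₂] [CompleteSpace (M₁ ⊓ M₂ : Submodule 𝕜 H)]
    [CompleteSpace (M₁ ⊓ (M₁ ⊓ M₂)ᗮ : Submodule 𝕜 H)]
    [CompleteSpace (M₂ ⊓ (M₁ ⊓ M₂)ᗮ : Submodule 𝕜 H)]
    (k : ℕ) (hk : 1 ≤ k) :
    ((proj M₂).comp (proj M₁)) ^ k - proj (M₁ ⊓ M₂)
      = ((proj (M₂ ⊓ (M₁ ⊓ M₂)ᗮ)).comp (proj (M₁ ⊓ (M₁ ⊓ M₂)ᗮ))) ^ k := by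
  obtain ⟨n, rfl⟩ := Nat.exists_eq_add_of_le' hk
  simp only [proj_eq_starProjection]
  rw [Submodule.starProjection_comp_starProjection_pow_succ inf_le_left inf_le_right,
    add_sub_cancel_left]

/-- `(P_{M₂}P_{M₁})^k − P_M = (P_B P_A)^k` where `A = M₁ ∩ M^⊥`, `B = M₂ ∩ M^⊥`,
`M = M₁ ∩ M₂`. -/
theorem alternating_pow_sub_proj {𝕜 H : Type*} [RCLike 𝕜] [NormedAddCommGroup H]
    [InnerProductSpace 𝕜 H] [CompleteSpace H] (M₁ M₂ : Submodule 𝕜 H)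
    [CompleteSpace M₁] [CompleteSpace M₂] [CompleteSpace (M₁ ⊓ M₂ : Submodule 𝕜 H)]
    [CompleteSpace (M₁ ⊓ (M₁ ⊓ M₂)ᗮ : Submodule 𝕜 H)]
    [CompleteSpace (M₂ ⊓ (M₁ ⊓ M₂)ᗮ : Submodule 𝕜 H)]
    (k : ℕ) (hk : 1 ≤ k) :
    ((proj M₂).comp (proj M₁)) ^ k - proj (M₁ ⊓ M₂)
      = ((proj (M₂ ⊓ (M₁ ⊓ M₂)ᗮ)).comp (proj (M₁ ⊓ (M₁ ⊓ M₂)ᗮ))) ^ k :=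
  alternating_pow_sub_proj_general M₁ M₂ k hk
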